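/- Let Q be a based groupoid quantale over a frame A, and let X be a stably supported Q-module. Then for every x ∈ X and every q ∈ Q one has ς_X(x)▹q = (⟨x,x⟩·1_Q) ∧ q. -/

import Mathlib

/-- A based groupoid quantale over a frame `A`: a frame `Q` (with top `1_Q`)
equipped with a sup-preserving associative multiplication, an involution,
unital left/right `A`-actions and an equivariant support `ς_Q : Q → A`. -/
structure BasedGroupoidQuantale (A : Type*) (Q : Type*)
    [Order.Frame A] [Order.Frame Q] where
  mul : Q → Q → Q
  star : Q → Q
  lres : A → Q → Q          -- `a ▹ q`
  rres : Q → A → Q          -- `q ◃ a`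
  suppQ : Q → A             -- `ς_Q`
  mul_assoc : ∀ p q r, mul (mul p q) r = mul p (mul q r)
  mul_sSup_left : ∀ (S : Set Q) (q : Q), mul (sSup S) q = ⨆ p ∈ S, mul p q
  mul_sSup_right : ∀ (p : Q) (S : Set Q), mul p (sSup S) = ⨆ q ∈ S, mul p q
  star_star : ∀ q, star (star q) = q
  star_mul : ∀ p q, star (mul p q) = mul (star q) (star p)
  star_sSup : ∀ (S : Set Q), star (sSup S) = ⨆ q ∈ S, star q
  lres_top_act : ∀ q, lres ⊤ q = q
  rres_top_act : ∀ q, rres q ⊤ = q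
  lres_sSup_left : ∀ (S : Set A) (q : Q), lres (sSup S) q = ⨆ a ∈ S, lres a q
  lres_sSup_right : ∀ (a : A) (S : Set Q), lres a (sSup S) = ⨆ q ∈ S, lres a q
  rres_sSup_left : ∀ (S : Set Q) (a : A), rres (sSup S) a = ⨆ q ∈ S, rres q a
  rres_sSup_right : ∀ (q : Q) (S : Set A), rres q (sSup S) = ⨆ a ∈ S, rres q a
  lres_lres : ∀ a b q, lres a (lres b q) = lres (a ⊓ b) q
  lres_rres_comm : ∀ a q b, rres (lres a q) b = lres a (rres q b)
  lres_mul : ∀ a p q, mul (lres a p) q = lres a (mul p q)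
  rres_mul : ∀ p a q, mul (rres p a) q = mul p (lres a q)
  mul_rres : ∀ p q a, rres (mul p q) a = mul p (rres q a)
  star_lres_rres : ∀ a q b, star (lres a (rres q b)) = lres b (rres (star q) a)
  lres_inf : ∀ a q m, lres a q ⊓ m = lres a (q ⊓ m)
  inf_rres : ∀ m q a, m ⊓ rres q a = rres (q ⊓ m) a
  suppQ_sSup : ∀ (S : Set Q), suppQ (sSup S) = ⨆ q ∈ S, suppQ q
  suppQ_top : suppQ ⊤ = ⊤
  suppQ_le_mul : ∀ q p, lres (suppQ q) p ≤ mul (mul q (star q)) p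
  suppQ_lres : ∀ q, lres (suppQ q) q = q
  suppQ_equivariant : ∀ a q, suppQ (lres a q) = a ⊓ suppQ q

/-- A pre-Hilbert `Q`-module: a frame `X` (with top `1_X`) with a sup-preserving
`Q`-action and a unital left `A`-action, equipped with an inner product. -/
structure PreHilbertModule {A Q : Type*} [Order.Frame A] [Order.Frame Q]
    (GQ : BasedGroupoidQuantale A Q) (X : Type*) [Order.Frame X] where
  smul : Q → X → X          -- `q · x`
  lres : A → X → X          -- `a ▹ x`
  inner : X → X → Q         -- `⟨x, y⟩`
  smul_sSup_left : ∀ (S : Set Q) (x : X), smul (sSup S) x = ⨆ q ∈ S, smul q x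
  smul_sSup_right : ∀ (q : Q) (S : Set X), smul q (sSup S) = ⨆ x ∈ S, smul q x
  mul_smul : ∀ p q x, smul (GQ.mul p q) x = smul p (smul q x)
  lres_top_act : ∀ x, lres ⊤ x = x
  lres_sSup_left : ∀ (S : Set A) (x : X), lres (sSup S) x = ⨆ a ∈ S, lres a x
  lres_sSup_right : ∀ (a : A) (S : Set X), lres a (sSup S) = ⨆ x ∈ S, lres a x
  lres_lres : ∀ a b x, lres a (lres b x) = lres (a ⊓ b) x
  lresQ_smul : ∀ a q x, smul (GQ.lres a q) x = lres a (smul q x)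
  rresQ_smul : ∀ q a x, smul (GQ.rres q a) x = smul q (lres a x)
  lres_inf : ∀ a (x y : X), lres a (x ⊓ y) = lres a x ⊓ y
  inner_smul : ∀ q x y, inner (smul q x) y = GQ.mul q (inner x y)
  lres_inner : ∀ a x, GQ.lres a (inner x ⊤) = inner (lres a x) ⊤
  inner_sSup : ∀ (S : Set X) (y : X), inner (sSup S) y = ⨆ x ∈ S, inner x y
  inner_star : ∀ x y, inner x y = GQ.star (inner y x)

/-!
By quantal-frame distributivity `a ▹ q = (a ▹ 1) ∧ q` it suffices to show `ς(x) ▹ 1 = ⟨x,x⟩ 1`.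
Stability gives `ς(x) ≤ ς_Q⟨x,x⟩`, hence `ς(x) ▹ 1 ≤ ς_Q⟨x,x⟩ ▹ 1 = ⟨x,x⟩ 1`; conversely, since
`ς(x)` restricts `x`, `⟨x,x⟩ 1 ≤ ⟨x,1⟩ 1 = ς(x) ▹ (⟨x,1⟩ 1) ≤ ς(x) ▹ 1`.
-/

theorem Monotone.of_map_sSup {α β : Type*} [CompleteLattice α] [CompleteLattice β]
    {f : α → β} (hf : ∀ S : Set α, f (sSup S) = ⨆ a ∈ S, f a) : Monotone f := by
  intro a b hab
  rw [← sup_eq_right.mpr hab, ← sSup_pair, hf]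
  exact le_iSup₂ (f := fun c _ => f c) a (Set.mem_insert a {b})

namespace BasedGroupoidQuantale

variable {A Q : Type*} [Order.Frame A] [Order.Frame Q] (GQ : BasedGroupoidQuantale A Q)

theorem lres_mono_left (q : Q) : Monotone fun a : A => GQ.lres a q :=
  Monotone.of_map_sSup fun S => GQ.lres_sSup_left S q

theorem lres_mono_right (a : A) : Monotone (GQ.lres a) :=
  Monotone.of_map_sSup (GQ.lres_sSup_right a)

theorem mul_mono_left (q : Q) : Monotone fun p : Q => GQ.mul p q :=
  Monotone.of_map_sSup fun S => GQ.mul_sSup_left S q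

theorem star_mono : Monotone GQ.star :=
  Monotone.of_map_sSup GQ.star_sSup

theorem lres_eq_lres_top_inf (a : A) (q : Q) : GQ.lres a q = GQ.lres a ⊤ ⊓ q := by
  rw [GQ.lres_inf, top_inf_eq]

end BasedGroupoidQuantale

namespace PreHilbertModule

variable {A Q X : Type*} [Order.Frame A] [Order.Frame Q] [Order.Frame X]
  {GQ : BasedGroupoidQuantale A Q} (M : PreHilbertModule GQ X)

theorem lres_mono_right (a : A) : Monotone (M.lres a) :=
  Monotone.of_map_sSup (M.lres_sSup_right a)

theorem inner_mono_left (y : X) : Monotone fun x : X => M.inner x y :=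
  Monotone.of_map_sSup fun S => M.inner_sSup S y

theorem inner_mono_right (x : X) : Monotone (M.inner x) := by
  intro y z hyz
  rw [M.inner_star x y, M.inner_star x z]
  exact GQ.star_mono (M.inner_mono_left x hyz)

theorem le_lres_top_of_lres_eq {a : A} {x : X} (hx : M.lres a x = x) : x ≤ M.lres a ⊤ :=
  hx ▸ M.lres_mono_right a le_top

theorem mul_inner_top_le_lres_top {a : A} {x : X} (hx : M.lres a x = x) :
    GQ.mul (M.inner x x) ⊤ ≤ GQ.lres a ⊤ := by
  have hinner : M.inner x ⊤ = GQ.lres a (M.inner x ⊤) := by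
    rw [M.lres_inner, hx]
  calc GQ.mul (M.inner x x) ⊤
      ≤ GQ.mul (M.inner x ⊤) ⊤ := GQ.mul_mono_left ⊤ (M.inner_mono_right x le_top)
    _ = GQ.lres a (GQ.mul (M.inner x ⊤) ⊤) := by rw [← GQ.lres_mul, ← hinner]
    _ ≤ GQ.lres a ⊤ := GQ.lres_mono_right a le_top

theorem supp_le_suppQ_inner {ς : X → A} (hmono : Monotone ς)
    (hς_le : ∀ x, M.lres (ς x) ⊤ ≤ M.smul (M.inner x x) ⊤)
    (hς_restrict : ∀ x, M.lres (ς x) x = x)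
    (hς_stable : ∀ (q : Q) (x : X), ς (M.smul q x) ≤ GQ.suppQ q) (x : X) :
    ς x ≤ GQ.suppQ (M.inner x x) :=
  calc ς x ≤ ς (M.lres (ς x) ⊤) := hmono (M.le_lres_top_of_lres_eq (hς_restrict x))
    _ ≤ ς (M.smul (M.inner x x) ⊤) := hmono (hς_le x)
    _ ≤ GQ.suppQ (M.inner x x) := hς_stable _ _

end PreHilbertModule

theorem stably_supported_lres_suppX_general {A Q X : Type*}
    [Order.Frame A] [Order.Frame Q] [Order.Frame X]
    (GQ : BasedGroupoidQuantale A Q) (M : PreHilbertModule GQ X)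
    (hQ_lres_top : ∀ q : Q, GQ.lres (GQ.suppQ q) ⊤ = GQ.mul q ⊤)
    (ς : X → A) (hmono : Monotone ς)
    (hς_le : ∀ x, M.lres (ς x) ⊤ ≤ M.smul (M.inner x x) ⊤)
    (hς_restrict : ∀ x, M.lres (ς x) x = x)
    (hς_stable : ∀ (q : Q) (x : X), ς (M.smul q x) ≤ GQ.suppQ q) :
    ∀ (x : X) (q : Q), GQ.lres (ς x) q = GQ.mul (M.inner x x) ⊤ ⊓ q := by
  intro x q
  have hsupp := M.supp_le_suppQ_inner hmono hς_le hς_restrict hς_stable x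
  have htop : GQ.lres (ς x) ⊤ = GQ.mul (M.inner x x) ⊤ :=
    le_antisymm (hQ_lres_top (M.inner x x) ▸ GQ.lres_mono_left ⊤ hsupp)
      (M.mul_inner_top_le_lres_top (hς_restrict x))
  rw [GQ.lres_eq_lres_top_inf, htop]

/-- Corollary 4.2: for a stably supported `Q`-module `X`,
`ς_X(x)▹q = ⟨x,x⟩1_Q ∧ q` for every `x ∈ X` and `q ∈ Q`. -/
theorem stably_supported_lres_suppX {A Q X : Type*}
    [Order.Frame A] [Order.Frame Q] [Order.Frame X]
    (GQ : BasedGroupoidQuantale A Q) (M : PreHilbertModule GQ X)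
    (hQ_stable : ∀ p q : Q, GQ.suppQ (GQ.mul p q) ≤ GQ.suppQ p)
    (hQ_lres_top : ∀ q : Q, GQ.lres (GQ.suppQ q) ⊤ = GQ.mul q ⊤)
    (ς : X → A) (hmono : Monotone ς) (hς_top : ς ⊤ = ⊤)
    (hς_le : ∀ x, M.lres (ς x) ⊤ ≤ M.smul (M.inner x x) ⊤)
    (hς_restrict : ∀ x, M.lres (ς x) x = x)
    (hς_stable : ∀ (q : Q) (x : X), ς (M.smul q x) ≤ GQ.suppQ q) :
    ∀ (x : X) (q : Q), GQ.lres (ς x) q = GQ.mul (M.inner x x) ⊤ ⊓ q :=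
  stably_supported_lres_suppX_general GQ M hQ_lres_top ς hmono hς_le hς_restrict hς_stable
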